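/- Let φ ∈ C([0,1]), and for λ ∈ ℝ let s₀(·,λ) solve −s₀'' + φ·s₀ = λ·s₀ with s₀(0)=0, s₀'(0)=1, and s₁(·,λ) solve the same equation with s₁(1)=0, s₁'(1)=1. Define Δ(λ) = s₀(1,λ). Then for λ₁ ≠ λ₂, (Δ(λ₁) − Δ(λ₂))/(λ₁ − λ₂) = ∫₀¹ s₀(x,λ₁)·s₁(x,λ₂) dx. -/

import Mathlib

/-!
For solutions `u` of `-u'' + φ u = λ u` and `v` of `-v'' + φ v = μ v`, the Wronskian
`W = u v' - u' v` satisfies `W' = (λ - μ) u v`, so `W(1) - W(0) = (λ - μ) ∫₀¹ u v`.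
With `u = s₀(·, λ₁)`, `v = s₁(·, λ₂)` the boundary data give `W(1) = Δ(λ₁)` and
`W(0) = -s₁(0, λ₂)`; the case `λ₁ = λ₂` of the same identity shows `-s₁(0, λ₂) = Δ(λ₂)`.
-/

open Set

def wronskian (u u' v v' : ℝ → ℝ) (x : ℝ) : ℝ := u x * v' x - u' x * v x

section Wronskian

variable {φ u u' v v' : ℝ → ℝ} {lam mu : ℝ}

theorem hasDerivAt_wronskian {x : ℝ} (hu : HasDerivAt u (u' x) x)
    (hu' : HasDerivAt u' ((φ x - lam) * u x) x) (hv : HasDerivAt v (v' x) x)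
    (hv' : HasDerivAt v' ((φ x - mu) * v x) x) :
    HasDerivAt (wronskian u u' v v') ((lam - mu) * (u x * v x)) x :=
  ((hu.mul hv').sub (hu'.mul hv)).congr_deriv (by ring)

theorem wronskian_sub_eq_integral {a b : ℝ} (hab : a ≤ b)
    (hu : ∀ x ∈ Icc a b, HasDerivAt u (u' x) x)
    (hu' : ∀ x ∈ Icc a b, HasDerivAt u' ((φ x - lam) * u x) x)
    (hv : ∀ x ∈ Icc a b, HasDerivAt v (v' x) x)
    (hv' : ∀ x ∈ Icc a b, HasDerivAt v' ((φ x - mu) * v x) x) :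
    wronskian u u' v v' b - wronskian u u' v v' a
      = (lam - mu) * ∫ x in a..b, u x * v x := by
  rw [← intervalIntegral.integral_const_mul]
  have hcont : ContinuousOn (fun x => u x * v x) (Icc a b) := fun x hx =>
    ((hu x hx).continuousAt.mul (hv x hx).continuousAt).continuousWithinAt
  refine (intervalIntegral.integral_eq_sub_of_hasDerivAt (fun x hx => ?_) ?_).symm
  · rw [uIcc_of_le hab] at hx
    exact hasDerivAt_wronskian (hu x hx) (hu' x hx) (hv x hx) (hv' x hx)
  · rw [← uIcc_of_le hab] at hcont
    exact (continuousOn_const.mul hcont).intervalIntegrable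

end Wronskian

theorem stmt6_general (φ : ℝ → ℝ)
    (s₀ s₀' s₁ s₁' : ℝ → ℝ → ℝ)
    (hds₀ : ∀ lam : ℝ, ∀ x ∈ Set.Icc (0:ℝ) 1, HasDerivAt (s₀ lam) (s₀' lam x) x)
    (hos₀ : ∀ lam : ℝ, ∀ x ∈ Set.Icc (0:ℝ) 1,
      HasDerivAt (s₀' lam) ((φ x - lam) * s₀ lam x) x)
    (hds₁ : ∀ lam : ℝ, ∀ x ∈ Set.Icc (0:ℝ) 1, HasDerivAt (s₁ lam) (s₁' lam x) x)
    (hos₁ : ∀ lam : ℝ, ∀ x ∈ Set.Icc (0:ℝ) 1,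
      HasDerivAt (s₁' lam) ((φ x - lam) * s₁ lam x) x)
    (h₀0 : ∀ lam : ℝ, s₀ lam 0 = 0) (h₀1 : ∀ lam : ℝ, s₀' lam 0 = 1)
    (h₁0 : ∀ lam : ℝ, s₁ lam 1 = 0) (h₁1 : ∀ lam : ℝ, s₁' lam 1 = 1)
    (Δ : ℝ → ℝ) (hΔ : ∀ lam : ℝ, Δ lam = s₀ lam 1)
    (lam₁ lam₂ : ℝ) (hne : lam₁ ≠ lam₂) :
    (Δ lam₁ - Δ lam₂) / (lam₁ - lam₂)
      = ∫ x in (0:ℝ)..1, s₀ lam₁ x * s₁ lam₂ x := by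
  have wronskian_identity (lam : ℝ) := wronskian_sub_eq_integral zero_le_one
    (hds₀ lam) (hos₀ lam) (hds₁ lam₂) (hos₁ lam₂)
  have hmixed := wronskian_identity lam₁
  have hequal := wronskian_identity lam₂
  simp only [wronskian, h₀0, h₀1, h₁0, h₁1, ← hΔ, sub_self, zero_mul] at hmixed hequal
  rw [div_eq_iff (sub_ne_zero.mpr hne)]
  linear_combination hmixed - hequal

theorem stmt6 (φ : ℝ → ℝ) (hφ : ContinuousOn φ (Set.Icc 0 1))
    (s₀ s₀' s₁ s₁' : ℝ → ℝ → ℝ)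
    (hds₀ : ∀ lam : ℝ, ∀ x ∈ Set.Icc (0:ℝ) 1, HasDerivAt (s₀ lam) (s₀' lam x) x)
    (hos₀ : ∀ lam : ℝ, ∀ x ∈ Set.Icc (0:ℝ) 1,
      HasDerivAt (s₀' lam) ((φ x - lam) * s₀ lam x) x)
    (hds₁ : ∀ lam : ℝ, ∀ x ∈ Set.Icc (0:ℝ) 1, HasDerivAt (s₁ lam) (s₁' lam x) x)
    (hos₁ : ∀ lam : ℝ, ∀ x ∈ Set.Icc (0:ℝ) 1,
      HasDerivAt (s₁' lam) ((φ x - lam) * s₁ lam x) x)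
    (h₀0 : ∀ lam : ℝ, s₀ lam 0 = 0) (h₀1 : ∀ lam : ℝ, s₀' lam 0 = 1)
    (h₁0 : ∀ lam : ℝ, s₁ lam 1 = 0) (h₁1 : ∀ lam : ℝ, s₁' lam 1 = 1)
    (Δ : ℝ → ℝ) (hΔ : ∀ lam : ℝ, Δ lam = s₀ lam 1)
    (lam₁ lam₂ : ℝ) (hne : lam₁ ≠ lam₂) :
    (Δ lam₁ - Δ lam₂) / (lam₁ - lam₂)
      = ∫ x in (0:ℝ)..1, s₀ lam₁ x * s₁ lam₂ x :=
  stmt6_general φ s₀ s₀' s₁ s₁' hds₀ hos₀ hds₁ hos₁ h₀0 h₀1 h₁0 h₁1 Δ hΔ lam₁ lam₂ hne
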